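/- arXiv:2506.23977 — 3 statements merged into one kernel-verified Lean document; each statement's English description precedes it below -/
import Mathlib

section
/- Let φ: ℝⁿ → ℝⁿ act coordinatewise by a scalar function ψ that is slope-restricted on [α, β]. Then for any diagonal matrix T = diag(λ₁, …, λₙ) with λᵢ ≥ 0 and any x, y ∈ ℝⁿ, the vector z = (x - y, φ(x) - φ(y)) ∈ ℝ²ⁿ satisfies zᵀ M z ≥ 0, where M is the block matrix [[-2αβT, (α+β)T], [(α+β)T, -2T]]. -/
open Matrix

lemma slope_key (ψ : ℝ → ℝ) (α β : ℝ)
    (hslope : ∀ s t : ℝ, t ≤ s →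
      α * (s - t) ≤ ψ s - ψ t ∧ ψ s - ψ t ≤ β * (s - t))
    (a b : ℝ) :
    0 ≤ (ψ a - ψ b - α * (a - b)) * (β * (a - b) - (ψ a - ψ b)) := by
  rcases le_total b a with h | h
  · obtain ⟨h1, h2⟩ := hslope a b h
    nlinarith
  · obtain ⟨h1, h2⟩ := hslope b a h
    nlinarith

/-- Lemma 1: coordinatewise slope-restricted nonlinearities satisfy the
incremental quadratic constraint with any nonnegative diagonal multiplier T. -/
theorem coordinatewise_slope_restricted_IQC
    (n : ℕ) (ψ : ℝ → ℝ) (α β : ℝ)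
    (hslope : ∀ s t : ℝ, t ≤ s →
      α * (s - t) ≤ ψ s - ψ t ∧ ψ s - ψ t ≤ β * (s - t))
    (φ : (Fin n → ℝ) → (Fin n → ℝ)) (hφ : ∀ x i, φ x i = ψ (x i))
    (lam : Fin n → ℝ) (hlam : ∀ i, 0 ≤ lam i)
    (T : Matrix (Fin n) (Fin n) ℝ) (hT : T = Matrix.diagonal lam)
    (M : Matrix (Fin n ⊕ Fin n) (Fin n ⊕ Fin n) ℝ)
    (hM : M = Matrix.fromBlocks ((-2 * α * β) • T) ((α + β) • T)
      ((α + β) • T) ((-2 : ℝ) • T))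
    (x y : Fin n → ℝ) :
    0 ≤ Sum.elim (x - y) (φ x - φ y) ⬝ᵥ
      M.mulVec (Sum.elim (x - y) (φ x - φ y)) := by
  subst hM hT
  simp only [Matrix.fromBlocks_mulVec, Matrix.smul_mulVec,
    Matrix.mulVec_diagonal, dotProduct, Fintype.sum_sum_type,
    Sum.elim_inl, Sum.elim_inr, Function.comp_apply, Pi.add_apply,
    Pi.smul_apply, Pi.sub_apply, smul_eq_mul]
  rw [← Finset.sum_add_distrib]
  apply Finset.sum_nonneg
  intro i _
  have := slope_key ψ α β hslope (x i) (y i)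
  have hl := hlam i
  rw [hφ, hφ]
  nlinarith [mul_nonneg hl this]
end

section
/- Let f: ℝⁿ → ℝᵐ be given by f(x) = W₁·φ(W₀x + b₀) + b₁ where φ is coordinatewise 1-Lipschitz (each coordinate slope-restricted on [0,1]). Suppose there exist L > 0 and a diagonal matrix T ⪰ 0 such that the block matrix [[-L²I + 0, W₀ᵀT], [TW₀, -2T + W₁ᵀW₁]] ⪯ 0 (the LipSDP condition for one hidden layer). Then ‖f(x) - f(y)‖₂ ≤ L‖x - y‖₂ for all x, y. -/
open Matrix

/-- Euclidean norm of a finite real vector. -/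
noncomputable def euclNorm {n : ℕ} (v : Fin n → ℝ) : ℝ :=
  Real.sqrt (∑ i, v i ^ 2)

/-- M ⪯ 0 for a symmetric real matrix. -/
def Matrix.NegSemidef {n : Type*} [Fintype n] (M : Matrix n n ℝ) : Prop :=
  (-M).PosSemidef

/-- LipSDP for a one-hidden-layer network: if the LipSDP matrix inequality
holds with some L > 0 and diagonal T ⪰ 0, then f is L-Lipschitz. -/
theorem lipsdp_one_hidden_layer
    (n h m : ℕ) (W₀ : Matrix (Fin h) (Fin n) ℝ) (W₁ : Matrix (Fin m) (Fin h) ℝ)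
    (b₀ : Fin h → ℝ) (b₁ : Fin m → ℝ)
    (ψ : ℝ → ℝ)
    (hψ : ∀ s t : ℝ, t ≤ s → 0 ≤ ψ s - ψ t ∧ ψ s - ψ t ≤ s - t)
    (φ : (Fin h → ℝ) → (Fin h → ℝ)) (hφ : ∀ v i, φ v i = ψ (v i))
    (f : (Fin n → ℝ) → (Fin m → ℝ))
    (hf : ∀ x, f x = W₁.mulVec (φ (W₀.mulVec x + b₀)) + b₁)
    (L : ℝ) (hL : 0 < L)
    (lam : Fin h → ℝ) (hlam : ∀ i, 0 ≤ lam i)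
    (T : Matrix (Fin h) (Fin h) ℝ) (hT : T = Matrix.diagonal lam)
    (hLMI : (Matrix.fromBlocks (-(L ^ 2) • (1 : Matrix (Fin n) (Fin n) ℝ))
        (W₀ᵀ * T) (T * W₀)
        ((-2 : ℝ) • T + W₁ᵀ * W₁)).NegSemidef) :
    ∀ x y : Fin n → ℝ, euclNorm (f x - f y) ≤ L * euclNorm (x - y) := by
  intro x y
  set a : Fin n → ℝ := x - y with ha
  set u : Fin h → ℝ := W₀.mulVec x + b₀ with hu
  set v : Fin h → ℝ := W₀.mulVec y + b₀ with hv
  set d : Fin h → ℝ := φ u - φ v with hd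
  have hfd : f x - f y = W₁.mulVec d := by
    rw [hf, hf, hd, Matrix.mulVec_sub]; abel
  have hc : W₀.mulVec a = u - v := by
    rw [ha, hu, hv, Matrix.mulVec_sub]; abel
  have hslope : ∀ i, lam i * d i ^ 2 ≤ lam i * (d i * (u i - v i)) := by
    intro i
    have hdi : d i = ψ (u i) - ψ (v i) := by simp [hd, hφ]
    have key : 0 ≤ d i * ((u i - v i) - d i) := by
      rcases le_total (v i) (u i) with hle | hle
      · obtain ⟨h1, h2⟩ := hψ (u i) (v i) hle
        rw [hdi]; exact mul_nonneg h1 (by linarith)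
      · obtain ⟨h1, h2⟩ := hψ (v i) (u i) hle
        rw [hdi]
        have g1 : ψ (u i) - ψ (v i) ≤ 0 := by linarith
        have g2 : u i - v i - (ψ (u i) - ψ (v i)) ≤ 0 := by linarith
        nlinarith
    nlinarith [mul_nonneg (hlam i) key]
  have hsum : ∑ i, lam i * d i ^ 2 ≤ ∑ i, lam i * (d i * (u i - v i)) :=
    Finset.sum_le_sum fun i _ => hslope i
  -- quadratic form inequality
  have hq := Matrix.PosSemidef.dotProduct_mulVec_nonneg hLMI (Sum.elim a d)
  rw [star_trivial, Matrix.fromBlocks_neg, Matrix.fromBlocks_mulVec] at hq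
  simp only [Sum.elim_comp_inl, Sum.elim_comp_inr, sumElim_dotProduct_sumElim,
    Matrix.neg_mulVec, dotProduct_add, dotProduct_neg] at hq
  have t1 : a ⬝ᵥ ((-(L ^ 2) • (1 : Matrix (Fin n) (Fin n) ℝ)).mulVec a)
      = -(L ^ 2) * (a ⬝ᵥ a) := by
    rw [Matrix.smul_mulVec, Matrix.one_mulVec, dotProduct_smul, smul_eq_mul]
  have t2 : a ⬝ᵥ ((W₀ᵀ * T).mulVec d) = ∑ i, lam i * (d i * (u i - v i)) := by
    rw [dotProduct_mulVec, ← Matrix.vecMul_vecMul, Matrix.vecMul_transpose, hc, hT]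
    simp only [dotProduct, Matrix.vecMul_diagonal]
    exact Finset.sum_congr rfl fun i _ => by simp [Pi.sub_apply]; ring
  have t3 : d ⬝ᵥ ((T * W₀).mulVec a) = ∑ i, lam i * (d i * (u i - v i)) := by
    rw [← Matrix.mulVec_mulVec, hc, hT]
    simp only [dotProduct, Matrix.mulVec_diagonal]
    exact Finset.sum_congr rfl fun i _ => by simp [Pi.sub_apply]; ring
  have t4 : d ⬝ᵥ (((-2 : ℝ) • T + W₁ᵀ * W₁).mulVec d)
      = -2 * (∑ i, lam i * d i ^ 2) + (W₁.mulVec d) ⬝ᵥ (W₁.mulVec d) := by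
    rw [Matrix.add_mulVec, dotProduct_add]
    congr 1
    · rw [Matrix.smul_mulVec, dotProduct_smul, smul_eq_mul, hT]
      simp only [dotProduct, Matrix.mulVec_diagonal, Finset.mul_sum]
      exact Finset.sum_congr rfl fun i _ => by ring
    · rw [← Matrix.mulVec_mulVec, dotProduct_mulVec, Matrix.vecMul_transpose]
  rw [t1, t2, t3, t4] at hq
  have key : (W₁.mulVec d) ⬝ᵥ (W₁.mulVec d) ≤ L ^ 2 * (a ⬝ᵥ a) := by linarith
  have hna : euclNorm (x - y) = Real.sqrt (a ⬝ᵥ a) := by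
    rw [← ha]; simp [euclNorm, dotProduct, pow_two]
  have hnb : euclNorm (f x - f y) = Real.sqrt ((W₁.mulVec d) ⬝ᵥ (W₁.mulVec d)) := by
    rw [hfd]; simp [euclNorm, dotProduct, pow_two]
  rw [hna, hnb]
  rw [show L * Real.sqrt (a ⬝ᵥ a) = Real.sqrt (L ^ 2 * (a ⬝ᵥ a)) by
    rw [Real.sqrt_mul (sq_nonneg L), Real.sqrt_sq hL.le]]
  exact Real.sqrt_le_sqrt key
end

section
/- Let Ψ: ℝⁿ → ℝᵐ be L-Lipschitz with respect to the Euclidean norm and let Ψ classify by argmax of its m output coordinates. If x is classified as class i with margin Ψ(x)ᵢ - Ψ(x)ⱼ > √2·L·ε for all j ≠ i, then every x' with ‖x' - x‖₂ ≤ ε is also classified as class i. -/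
lemma euclNorm_nonneg {n : ℕ} (v : Fin n → ℝ) : 0 ≤ euclNorm v :=
  Real.sqrt_nonneg _

lemma euclNorm_sq {n : ℕ} (v : Fin n → ℝ) : euclNorm v ^ 2 = ∑ i, v i ^ 2 := by
  rw [euclNorm, Real.sq_sqrt]
  exact Finset.sum_nonneg fun i _ => sq_nonneg _

lemma pair_sq_le {m : ℕ} (v : Fin m → ℝ) (i j : Fin m) (hij : j ≠ i) :
    v i ^ 2 + v j ^ 2 ≤ euclNorm v ^ 2 := by
  rw [euclNorm_sq]
  have : v i ^ 2 + v j ^ 2 = ∑ k ∈ ({i, j} : Finset (Fin m)), v k ^ 2 := by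
    rw [Finset.sum_pair (Ne.symm hij)]
  rw [this]
  exact Finset.sum_le_sum_of_subset_of_nonneg (Finset.subset_univ _)
    (fun k _ _ => sq_nonneg _)

/-- Certified robustness radius from a global Lipschitz bound: if Ψ is
L-Lipschitz and x is classified as class i with margin greater than √2·L·ε
over every other class, then any perturbation of norm at most ε is
classified the same. -/
theorem lipschitz_certified_robustness
    (n m : ℕ) (Ψ : (Fin n → ℝ) → (Fin m → ℝ)) (L : ℝ) (hL : 0 < L)
    (hLip : ∀ u w : Fin n → ℝ, euclNorm (Ψ u - Ψ w) ≤ L * euclNorm (u - w))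
    (x : Fin n → ℝ) (i : Fin m) (ε : ℝ) (hε : 0 ≤ ε)
    (hmargin : ∀ j : Fin m, j ≠ i → Real.sqrt 2 * L * ε < Ψ x i - Ψ x j) :
    ∀ x' : Fin n → ℝ, euclNorm (x' - x) ≤ ε →
      ∀ j : Fin m, j ≠ i → Ψ x' j < Ψ x' i := by
  intro x' hx' j hj
  set a : Fin m → ℝ := Ψ x' - Ψ x with ha
  have hai : a i = Ψ x' i - Ψ x i := rfl
  have haj : a j = Ψ x' j - Ψ x j := rfl
  have hpair : a i ^ 2 + a j ^ 2 ≤ euclNorm a ^ 2 := pair_sq_le a i j hj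
  have hN : euclNorm a ≤ L * ε := by
    calc euclNorm a ≤ L * euclNorm (x' - x) := hLip x' x
    _ ≤ L * ε := by nlinarith [euclNorm_nonneg (x' - x)]
  have hNn : 0 ≤ euclNorm a := euclNorm_nonneg a
  have hsq : (a i - a j) ^ 2 ≤ (Real.sqrt 2 * euclNorm a) ^ 2 := by
    have h2 : Real.sqrt 2 ^ 2 = 2 := Real.sq_sqrt (by norm_num)
    nlinarith [sq_nonneg (a i + a j)]
  have habs : a i - a j ≥ -(Real.sqrt 2 * euclNorm a) := by
    nlinarith [mul_nonneg (Real.sqrt_nonneg 2) hNn]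
  have hm := hmargin j hj
  have hle : Real.sqrt 2 * euclNorm a ≤ Real.sqrt 2 * (L * ε) := by
    nlinarith [Real.sqrt_nonneg 2]
  have : Ψ x' i - Ψ x' j = (Ψ x i - Ψ x j) + (a i - a j) := by
    rw [hai, haj]; ring
  nlinarith [this]
end
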